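/- Under the envelope setup (S₁ = P(·) + q with P self-adjoint nonexpansive and positive semidefinite, S₂ = ∇f₂ nonexpansive), the envelope F(x) = ½⟨Px,x⟩ - f₂(Px+q) is convex. -/

import Mathlib

open scoped RealInnerProductSpace

/-- A mapping is nonexpansive if it is 1-Lipschitz. -/
def Nonexpansive {n : ℕ} (T : EuclideanSpace ℝ (Fin n) → EuclideanSpace ℝ (Fin n)) : Prop :=
  ∀ x y, ‖T x - T y‖ ≤ ‖x - y‖

/-!
The gradient of `F x = ½⟪P x, x⟫ - f₂ (P x + q)` is `P x - P (S₂ (P x + q))`, and a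
differentiable function with monotone gradient is convex (restrict to lines and use the
one-variable criterion). With `v = x - y`, monotonicity reads
`⟪P v, v⟫ ≥ ⟪S₂ (P x + q) - S₂ (P y + q), P v⟫`; the right side is at most `‖P v‖²` because
`S₂` is nonexpansive, and `‖P v‖² ≤ ⟪P v, v⟫` for a positive contraction `P`, by Cauchy–Schwarz
for the semi-inner product `⟪P ·, ·⟫` applied to `v` and `P v`.
-/

open Set

variable {E : Type*} [NormedAddCommGroup E] [InnerProductSpace ℝ E]

namespace ContinuousLinearMap.IsPositive

variable {T : E →L[ℝ] E}

theorem inner_sq_le_inner_self_mul_inner_self (hT : T.IsPositive) (x y : E) :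
    ⟪T x, y⟫ ^ 2 ≤ ⟪T x, x⟫ * ⟪T y, y⟫ := by
  have hsymm : ⟪T y, x⟫ = ⟪T x, y⟫ := by rw [hT.inner_left_eq_inner_right, real_inner_comm]
  have hquad : ∀ t : ℝ, 0 ≤ ⟪T y, y⟫ * (t * t) + 2 * ⟪T x, y⟫ * t + ⟪T x, x⟫ := by
    intro t
    have := hT.inner_nonneg_left (t • y + x)
    simp only [map_add, map_smul, inner_add_left, inner_add_right, real_inner_smul_left,
      real_inner_smul_right, hsymm] at this
    linarith
  have := discrim_le_zero hquad
  rw [discrim] at this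
  linarith

theorem norm_apply_sq_le_inner_self (hT : T.IsPositive) (hT1 : ∀ x, ‖T x‖ ≤ ‖x‖) (x : E) :
    ‖T x‖ ^ 2 ≤ ⟪T x, x⟫ := by
  rcases (norm_nonneg (T x)).eq_or_lt with h0 | hpos
  · rw [← h0]; simpa using hT.inner_nonneg_left x
  have hcs := hT.inner_sq_le_inner_self_mul_inner_self x (T x)
  have hTT : ⟪T (T x), T x⟫ ≤ ‖T x‖ ^ 2 :=
    calc ⟪T (T x), T x⟫ ≤ ‖T (T x)‖ * ‖T x‖ := real_inner_le_norm _ _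
      _ ≤ ‖T x‖ * ‖T x‖ := by gcongr; exact hT1 _
      _ = ‖T x‖ ^ 2 := (sq _).symm
  rw [real_inner_self_eq_norm_sq] at hcs
  nlinarith [hT.inner_nonneg_left x]

end ContinuousLinearMap.IsPositive

variable [CompleteSpace E]

theorem HasGradientAt.sub {f g : E → ℝ} {f' g' x : E} (hf : HasGradientAt f f' x)
    (hg : HasGradientAt g g' x) : HasGradientAt (fun y => f y - g y) (f' - g') x := by
  rw [hasGradientAt_iff_hasFDerivAt, map_sub]
  exact hf.hasFDerivAt.sub hg.hasFDerivAt

theorem HasGradientAt.hasDerivAt_comp_add_smul {f : E → ℝ} {g x v : E} {t : ℝ}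
    (hf : HasGradientAt f g (x + t • v)) :
    HasDerivAt (fun s : ℝ => f (x + s • v)) ⟪g, v⟫ t := by
  have hline : HasDerivAt (fun s : ℝ => x + s • v) v t := by
    simpa using ((hasDerivAt_id t).smul_const v).const_add x
  have h := hf.hasFDerivAt.comp_hasDerivAt t hline
  simp only [Function.comp_def, InnerProductSpace.toDual_apply_apply] at h
  exact h

theorem convexOn_univ_of_hasGradientAt_of_monotone {f : E → ℝ} {f' : E → E}
    (hf : ∀ x, HasGradientAt f (f' x) x) (hmono : ∀ x y, 0 ≤ ⟪f' x - f' y, x - y⟫) :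
    ConvexOn ℝ univ f := by
  refine ⟨convex_univ, fun x _ y _ a b ha hb hab => ?_⟩
  set v := y - x
  have hderiv (t : ℝ) : HasDerivAt (fun s : ℝ => f (x + s • v)) ⟪f' (x + t • v), v⟫ t :=
    (hf _).hasDerivAt_comp_add_smul
  have hline : ConvexOn ℝ univ (fun s : ℝ => f (x + s • v)) := by
    refine Monotone.convexOn_univ_of_deriv (fun t => (hderiv t).differentiableAt) ?_
    intro s t hst
    simp only [(hderiv _).deriv]
    have key : 0 ≤ (t - s) * (⟪f' (x + t • v), v⟫ - ⟪f' (x + s • v), v⟫) := by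
      have := hmono (x + t • v) (x + s • v)
      rwa [show x + t • v - (x + s • v) = (t - s) • v by module, real_inner_smul_right,
        inner_sub_left] at this
    rcases hst.eq_or_lt with rfl | hlt
    · rfl
    · linarith [nonneg_of_mul_nonneg_right key (sub_pos.2 hlt)]
  have hseg := hline.2 (mem_univ 0) (mem_univ 1) ha hb hab
  simp only at hseg
  rw [show a • (0 : ℝ) + b • (1 : ℝ) = b by simp,
    show x + b • v = a • x + b • y by rw [eq_sub_of_add_eq hab]; module] at hseg
  simpa [v] using hseg

namespace LinearMap.IsSymmetric

variable {T : E →L[ℝ] E}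

theorem hasGradientAt_half_inner_self (hT : (T : E →ₗ[ℝ] E).IsSymmetric) (x : E) :
    HasGradientAt (fun y => 1 / 2 * ⟪T y, y⟫) (T x) x := by
  refine hasGradientAt_iff_hasFDerivAt.2
    ((((T.hasFDerivAt (x := x)).inner ℝ (hasFDerivAt_id x)).const_mul (1 / 2 : ℝ)).congr_fderiv ?_)
  ext v
  have := hT x v
  simp only [ContinuousLinearMap.coe_coe] at this
  simp [fderivInnerCLM_apply, real_inner_comm, this]
  ring

theorem hasGradientAt_comp_add_const (hT : (T : E →ₗ[ℝ] E).IsSymmetric) {f : E → ℝ} {g x : E}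
    (q : E) (hf : HasGradientAt f g (T x + q)) :
    HasGradientAt (fun y => f (T y + q)) (T g) x := by
  refine hasGradientAt_iff_hasFDerivAt.2
    ((hf.hasFDerivAt.comp x (T.hasFDerivAt.add_const q)).congr_fderiv ?_)
  ext v
  have := hT g v
  simp only [ContinuousLinearMap.coe_coe] at this
  simp [this]

end LinearMap.IsSymmetric

theorem stmt8 {n : ℕ}
    (P : EuclideanSpace ℝ (Fin n) →L[ℝ] EuclideanSpace ℝ (Fin n))
    (hPsa : ∀ x y, ⟪P x, y⟫ = ⟪x, P y⟫) (hPne : ∀ x, ‖P x‖ ≤ ‖x‖)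
    (hPpsd : ∀ x, 0 ≤ ⟪P x, x⟫)
    (q : EuclideanSpace ℝ (Fin n))
    (f₂ : EuclideanSpace ℝ (Fin n) → ℝ)
    (S₂ : EuclideanSpace ℝ (Fin n) → EuclideanSpace ℝ (Fin n))
    (hf₂ : ∀ x, HasGradientAt f₂ (S₂ x) x)
    (hS₂ : Nonexpansive S₂) :
    ConvexOn ℝ Set.univ (fun x => 1/2 * ⟪P x, x⟫ - f₂ (P x + q)) := by
  have hP : P.IsPositive := ⟨hPsa, hPpsd⟩
  refine convexOn_univ_of_hasGradientAt_of_monotone (f' := fun x => P x - P (S₂ (P x + q)))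
    (fun x => (hP.isSymmetric.hasGradientAt_half_inner_self x).sub
      (hP.isSymmetric.hasGradientAt_comp_add_const q (hf₂ _))) fun x y => ?_
  set v := x - y
  have hS : ‖S₂ (P x + q) - S₂ (P y + q)‖ ≤ ‖P v‖ := by
    simpa [v, map_sub] using hS₂ (P x + q) (P y + q)
  calc 0 ≤ ⟪P v, v⟫ - ‖P v‖ ^ 2 := sub_nonneg.2 (hP.norm_apply_sq_le_inner_self hPne v)
    _ ≤ ⟪P v, v⟫ - ⟪S₂ (P x + q) - S₂ (P y + q), P v⟫ := by
      gcongr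
      calc _ ≤ ‖S₂ (P x + q) - S₂ (P y + q)‖ * ‖P v‖ := real_inner_le_norm _ _
        _ ≤ ‖P v‖ * ‖P v‖ := by gcongr
        _ = ‖P v‖ ^ 2 := (sq _).symm
    _ = ⟪P x - P (S₂ (P x + q)) - (P y - P (S₂ (P y + q))), v⟫ := by
      rw [← hPsa, show P x - P (S₂ (P x + q)) - (P y - P (S₂ (P y + q)))
        = P v - P (S₂ (P x + q) - S₂ (P y + q)) by simp only [v, map_sub]; abel, inner_sub_left]
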